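/- Let Y(t) be the principal fundamental matrix of the T-periodic linear system ẏ = A(t)y and suppose its T-periodic adjoint solutions are spanned by z₀(t). Then the range of the linear map Y(θ+T)Y(θ)⁻¹ - I equals the orthogonal complement of z₀(θ) in ℝⁿ, for each θ ∈ ℝ. -/

import Mathlib

/-!
For an adjoint solution `z` and a solution `Y · v`, the pairing `z t ⬝ᵥ Y t v` is constant, so
`(Y t)ᵀ z t = z 0` and the transposed monodromy matrix `Mᵀ = (Y θ)⁻ᵀ Y(θ + T)ᵀ` maps `z (θ + T)`
to `z θ`. Every `ζ` is the value at `θ` of the adjoint solution `t ↦ (Y t)⁻ᵀ (Y θ)ᵀ ζ`; by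
uniqueness for the `T`-periodic adjoint equation this solution is `T`-periodic iff it returns to
`ζ` after one period, i.e. iff `Mᵀ ζ = ζ`. Hence `ker (M - 1)ᵀ = span {z₀ θ}`, and
`range (M - 1) = (ker (M - 1)ᵀ)ᗮ = (z₀ θ)ᗮ`.
-/

open Matrix

section Calculus

variable {ι : Type*} [Fintype ι] {𝕜 : Type*} [NontriviallyNormedField 𝕜]

theorem HasDerivAt.dotProduct {f g : 𝕜 → ι → 𝕜} {f' g' : ι → 𝕜} {t : 𝕜}
    (hf : HasDerivAt f f' t) (hg : HasDerivAt g g' t) :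
    HasDerivAt (fun s => f s ⬝ᵥ g s) (f' ⬝ᵥ g t + f t ⬝ᵥ g') t := by
  simp only [_root_.dotProduct, ← Finset.sum_add_distrib]
  exact HasDerivAt.fun_sum fun i _ => (hasDerivAt_pi.1 hf i).mul (hasDerivAt_pi.1 hg i)

variable [DecidableEq ι]

theorem Differentiable.matrix_det {M : 𝕜 → Matrix ι ι 𝕜}
    (hM : ∀ i j, Differentiable 𝕜 fun s => M s i j) :
    Differentiable 𝕜 fun s => (M s).det := by
  simp only [det_apply']
  exact Differentiable.fun_sum fun σ _ =>
    (Differentiable.fun_finsetProd fun i _ => hM (σ i) i).const_mul _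

theorem Differentiable.matrix_inv_mulVec {M : 𝕜 → Matrix ι ι 𝕜}
    (hM : ∀ i j, Differentiable 𝕜 fun s => M s i j) (hdet : ∀ s, IsUnit (M s).det)
    (w : ι → 𝕜) :
    Differentiable 𝕜 fun s => (M s)⁻¹ *ᵥ w := by
  have hcramer : ∀ s, (M s)⁻¹ *ᵥ w = ((M s).det)⁻¹ • cramer (M s) w := fun s => by
    rw [inv_def, smul_mulVec, cramer_eq_adjugate_mulVec, Ring.inverse_eq_inv]
  simp only [hcramer]
  refine ((Differentiable.matrix_det hM).inv fun s => (hdet s).ne_zero).smul ?_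
  refine differentiable_pi.2 fun i => ?_
  simp only [cramer_apply]
  refine Differentiable.matrix_det fun a b => ?_
  by_cases hb : b = i
  · subst hb; simp
  · simpa [updateCol_ne hb] using hM a b

end Calculus

section ODE

theorem linear_ODE_solution_unique {E : Type*} [NormedAddCommGroup E] [NormedSpace ℝ E]
    {A : ℝ → E →L[ℝ] E} (hA : Continuous A) {f g : ℝ → E}
    (hf : ∀ t, HasDerivAt f (A t (f t)) t) (hg : ∀ t, HasDerivAt g (A t (g t)) t)
    {t₀ : ℝ} (h : f t₀ = g t₀) : f = g := by
  funext t
  obtain ⟨a, b, ht, ht₀⟩ : ∃ a b, t ∈ Set.Ioo a b ∧ t₀ ∈ Set.Ioo a b :=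
    ⟨min t t₀ - 1, max t t₀ + 1, by grind⟩
  obtain ⟨K, hK⟩ := (isCompact_Icc.image_of_continuousOn hA.nnnorm.continuousOn).bddAbove
  have hlip : ∀ s ∈ Set.Ioo a b, LipschitzOnWith K (A s) Set.univ := fun s hs =>
    ((A s).lipschitz.weaken (hK ⟨s, Set.Ioo_subset_Icc_self hs, rfl⟩)).lipschitzOnWith
  exact ODE_solution_unique_of_mem_Ioo hlip ht₀ (fun s _ => ⟨hf s, trivial⟩)
    (fun s _ => ⟨hg s, trivial⟩) h ht

variable {ι : Type*} [Fintype ι] {A : ℝ → Matrix ι ι ℝ}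

theorem mulVec_ODE_solution_unique (hA : Continuous A) {f g : ℝ → ι → ℝ}
    (hf : ∀ t, HasDerivAt f (A t *ᵥ f t) t) (hg : ∀ t, HasDerivAt g (A t *ᵥ g t) t)
    {t₀ : ℝ} (h : f t₀ = g t₀) : f = g :=
  linear_ODE_solution_unique (A := fun t => (A t).mulVecLin.toContinuousLinearMap)
    (continuous_clm_apply.2 fun _ => hA.matrix_mulVec continuous_const) hf hg h

theorem adjoint_ODE_solution_unique (hA : Continuous A) {f g : ℝ → ι → ℝ}
    (hf : ∀ t, HasDerivAt f (-((A t)ᵀ *ᵥ f t)) t)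
    (hg : ∀ t, HasDerivAt g (-((A t)ᵀ *ᵥ g t)) t)
    {t₀ : ℝ} (h : f t₀ = g t₀) : f = g :=
  linear_ODE_solution_unique (A := fun t => -(A t)ᵀ.mulVecLin.toContinuousLinearMap)
    (continuous_clm_apply.2 fun _ => (hA.matrix_transpose.matrix_mulVec continuous_const).neg)
    hf hg h

theorem adjoint_periodic_of_add_period_eq (hA : Continuous A) {T : ℝ}
    (hAper : ∀ t, A (t + T) = A t) {z : ℝ → ι → ℝ}
    (hz : ∀ t, HasDerivAt z (-((A t)ᵀ *ᵥ z t)) t) {θ : ℝ}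
    (h : z (θ + T) = z θ) (t : ℝ) : z (t + T) = z t := by
  have hshift : ∀ t, HasDerivAt (fun s => z (s + T)) (-((A t)ᵀ *ᵥ z (t + T))) t := fun t => by
    simpa [hAper] using (hz (t + T)).comp_add_const t T
  exact congrFun (adjoint_ODE_solution_unique hA hshift hz h) t

end ODE

section Fundamental

variable {ι : Type*} [Fintype ι] [DecidableEq ι] {A Y : ℝ → Matrix ι ι ℝ}
  (hY : ∀ v t, HasDerivAt (fun s => Y s *ᵥ v) (A t *ᵥ (Y t *ᵥ v)) t)
include hY

theorem differentiable_fundamental_apply (i j : ι) :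
    Differentiable ℝ fun s => Y s i j := fun t => by
  simpa using (hasDerivAt_pi.1 (hY (Pi.single j 1) t) i).differentiableAt

theorem isUnit_det_fundamental (hA : Continuous A) (hY0 : Y 0 = 1) (t : ℝ) :
    IsUnit (Y t).det := by
  rw [← isUnit_iff_isUnit_det, ← mulVec_injective_iff_isUnit]
  intro v w hvw
  simpa [hY0] using congrFun (mulVec_ODE_solution_unique hA (hY v) (hY w) hvw) 0

theorem adjoint_dotProduct_fundamental_mulVec (hY0 : Y 0 = 1) {z : ℝ → ι → ℝ}
    (hz : ∀ t, HasDerivAt z (-((A t)ᵀ *ᵥ z t)) t) (v : ι → ℝ) (t : ℝ) :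
    z t ⬝ᵥ (Y t *ᵥ v) = z 0 ⬝ᵥ v := by
  have hconst : ∀ s, HasDerivAt (fun s => z s ⬝ᵥ (Y s *ᵥ v)) 0 s := fun s => by
    refine ((hz s).dotProduct (hY v s)).congr_deriv ?_
    rw [neg_dotProduct, mulVec_transpose, ← dotProduct_mulVec, neg_add_cancel]
  simpa [hY0] using is_const_of_deriv_eq_zero (fun s => (hconst s).differentiableAt)
    (fun s => (hconst s).deriv) t 0

theorem fundamental_transpose_mulVec_adjoint (hY0 : Y 0 = 1) {z : ℝ → ι → ℝ}
    (hz : ∀ t, HasDerivAt z (-((A t)ᵀ *ᵥ z t)) t) (t : ℝ) : (Y t)ᵀ *ᵥ z t = z 0 :=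
  dotProduct_eq _ _ fun v => by
    rw [mulVec_transpose, ← dotProduct_mulVec, adjoint_dotProduct_fundamental_mulVec hY hY0 hz]

theorem hasDerivAt_transpose_inv_fundamental_mulVec (hdet : ∀ t, IsUnit (Y t).det)
    (w : ι → ℝ) (t : ℝ) :
    HasDerivAt (fun s => ((Y s)ᵀ)⁻¹ *ᵥ w) (-((A t)ᵀ *ᵥ (((Y t)ᵀ)⁻¹ *ᵥ w))) t := by
  set z := fun s => ((Y s)ᵀ)⁻¹ *ᵥ w
  have hz : HasDerivAt z (deriv z t) t :=
    (Differentiable.matrix_inv_mulVec (M := fun s => (Y s)ᵀ)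
      (fun i j => differentiable_fundamental_apply hY j i)
      (fun s => isUnit_det_transpose _ (hdet s)) w t).hasDerivAt
  have hpairing : ∀ s v, z s ⬝ᵥ (Y s *ᵥ v) = w ⬝ᵥ v := fun s v => by
    rw [dotProduct_mulVec, ← mulVec_transpose, mulVec_mulVec,
      mul_nonsing_inv _ (isUnit_det_transpose _ (hdet s)), one_mulVec]
  have hsum : ∀ v, deriv z t ⬝ᵥ (Y t *ᵥ v) + z t ⬝ᵥ (A t *ᵥ (Y t *ᵥ v)) = 0 := fun v =>
    (hz.dotProduct (hY v t)).unique <| (hasDerivAt_const t (w ⬝ᵥ v)).congr_of_eventuallyEq <|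
      .of_forall fun s => hpairing s v
  have hderiv : deriv z t = -((A t)ᵀ *ᵥ z t) := by
    refine eq_neg_iff_add_eq_zero.2 (dotProduct_eq_zero _ fun u => ?_)
    have h := hsum ((Y t)⁻¹ *ᵥ u)
    rw [mulVec_mulVec, mul_nonsing_inv _ (hdet t), one_mulVec] at h
    rw [add_dotProduct, mulVec_transpose, ← dotProduct_mulVec]
    exact h
  rwa [hderiv] at hz

theorem monodromy_transpose_mulVec_adjoint (hY0 : Y 0 = 1) (hdet : ∀ t, IsUnit (Y t).det)
    {z : ℝ → ι → ℝ} (hz : ∀ t, HasDerivAt z (-((A t)ᵀ *ᵥ z t)) t) (θ T : ℝ) :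
    (Y (θ + T) * (Y θ)⁻¹)ᵀ *ᵥ z (θ + T) = z θ := by
  rw [transpose_mul, ← mulVec_mulVec, fundamental_transpose_mulVec_adjoint hY hY0 hz,
    ← fundamental_transpose_mulVec_adjoint hY hY0 hz θ, transpose_nonsing_inv, mulVec_mulVec,
    nonsing_inv_mul _ (isUnit_det_transpose _ (hdet θ)), one_mulVec]

theorem monodromy_transpose_mulVec_eq_self_iff (hY0 : Y 0 = 1) (hdet : ∀ t, IsUnit (Y t).det)
    {z : ℝ → ι → ℝ} (hz : ∀ t, HasDerivAt z (-((A t)ᵀ *ᵥ z t)) t) (θ T : ℝ) :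
    (Y (θ + T) * (Y θ)⁻¹)ᵀ *ᵥ z θ = z θ ↔ z (θ + T) = z θ := by
  have hunit : IsUnit (Y (θ + T) * (Y θ)⁻¹)ᵀ := by
    rw [isUnit_transpose, isUnit_iff_isUnit_det, det_mul]
    exact (hdet _).mul (isUnit_nonsing_inv_det _ (hdet θ))
  nth_rewrite 2 [← monodromy_transpose_mulVec_adjoint hY hY0 hdet hz θ T]
  rw [(mulVec_injective_iff_isUnit.2 hunit).eq_iff, eq_comm]

end Fundamental

theorem Matrix.range_mulVec_eq_orthogonal_ker_transpose {m k : Type*} [Fintype m]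
    [DecidableEq m] [Fintype k] [DecidableEq k] (B : Matrix m k ℝ) :
    Set.range B.mulVec = {η | ∀ ζ ∈ LinearMap.ker Bᵀ.mulVecLin, η ⬝ᵥ ζ = 0} := by
  ext η
  constructor
  · rintro ⟨w, rfl⟩ ζ hζ
    rw [LinearMap.mem_ker, mulVecLin_apply] at hζ
    rw [dotProduct_comm, dotProduct_mulVec, ← mulVec_transpose, hζ, zero_dotProduct]
  · intro h
    have hmem : WithLp.toLp 2 η ∈ (LinearMap.ker Bᵀ.toEuclideanLin)ᗮ := by
      refine (Submodule.mem_orthogonal _ _).2 fun u hu => ?_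
      have hu' : Bᵀ *ᵥ u.ofLp = 0 := by
        simpa using congrArg WithLp.ofLp (LinearMap.mem_ker.1 hu)
      simpa [EuclideanSpace.inner_eq_star_dotProduct] using h u.ofLp hu'
    rw [LinearMap.orthogonal_ker, ← toEuclideanLin_conjTranspose_eq_adjoint] at hmem
    obtain ⟨w, hw⟩ := hmem
    exact ⟨w.ofLp, by simpa using congrArg WithLp.ofLp hw⟩

theorem Matrix.range_mulVec_eq_of_ker_transpose_eq_span {m k : Type*} [Fintype m]
    [DecidableEq m] [Fintype k] [DecidableEq k] {B : Matrix m k ℝ} {z : m → ℝ}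
    (h : LinearMap.ker Bᵀ.mulVecLin = ℝ ∙ z) : Set.range B.mulVec = {η | η ⬝ᵥ z = 0} := by
  rw [range_mulVec_eq_orthogonal_ker_transpose, h]
  ext η
  refine ⟨fun hη => hη z (Submodule.mem_span_singleton_self z), fun hη ζ hζ => ?_⟩
  obtain ⟨c, rfl⟩ := Submodule.mem_span_singleton.1 hζ
  rw [dotProduct_smul, show η ⬝ᵥ z = 0 from hη, smul_zero]

theorem range_monodromy_minus_id_general
    {n : ℕ} (T : ℝ)
    (A : ℝ → Matrix (Fin n) (Fin n) ℝ)
    (hAcont : Continuous fun p : ℝ × (Fin n → ℝ) => (A p.1).mulVec p.2)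
    (hAper : ∀ t, A (t + T) = A t)
    (Y : ℝ → Matrix (Fin n) (Fin n) ℝ)
    (hY : ∀ (v : Fin n → ℝ) (t : ℝ),
      HasDerivAt (fun s => (Y s).mulVec v) ((A t).mulVec ((Y t).mulVec v)) t)
    (hY0 : Y 0 = 1)
    (z₀ : ℝ → Fin n → ℝ)
    (hz₀ : ∀ t, HasDerivAt z₀ (-(A t)ᵀ.mulVec (z₀ t)) t)
    (hz₀per : ∀ t, z₀ (t + T) = z₀ t)
    (hspan : ∀ z : ℝ → Fin n → ℝ,
      (∀ t, HasDerivAt z (-(A t)ᵀ.mulVec (z t)) t) → (∀ t, z (t + T) = z t) →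
        ∃ c : ℝ, z = c • z₀) :
    ∀ θ : ℝ,
      {x : Fin n → ℝ | ∃ w, (Y (θ + T) * (Y θ)⁻¹ - 1).mulVec w = x} =
        {η : Fin n → ℝ | η ⬝ᵥ z₀ θ = 0} := by
  intro θ
  have hA : Continuous A := continuous_matrix fun i j => by
    simpa [Function.comp_def] using
      (continuous_apply i).comp (hAcont.comp (Continuous.prodMk_left (Pi.single j 1)))
  have hdet := isUnit_det_fundamental hY hA hY0
  refine range_mulVec_eq_of_ker_transpose_eq_span (Submodule.ext fun ζ => ?_)
  rw [LinearMap.mem_ker, mulVecLin_apply, transpose_sub, transpose_one, sub_mulVec, one_mulVec,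
    sub_eq_zero, Submodule.mem_span_singleton]
  constructor
  · intro hfix
    set z := fun s => ((Y s)ᵀ)⁻¹ *ᵥ ((Y θ)ᵀ *ᵥ ζ)
    have hz := hasDerivAt_transpose_inv_fundamental_mulVec hY hdet ((Y θ)ᵀ *ᵥ ζ)
    have hzθ : z θ = ζ := by
      simp only [z]
      rw [mulVec_mulVec, nonsing_inv_mul _ (isUnit_det_transpose _ (hdet θ)), one_mulVec]
    rw [← hzθ, monodromy_transpose_mulVec_eq_self_iff hY hY0 hdet hz] at hfix
    obtain ⟨c, hc⟩ := hspan z hz (adjoint_periodic_of_add_period_eq hA hAper hz hfix)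
    exact ⟨c, by rw [← hzθ, hc]; rfl⟩
  · rintro ⟨c, rfl⟩
    rw [mulVec_smul, (monodromy_transpose_mulVec_eq_self_iff hY hY0 hdet hz₀ θ T).2 (hz₀per θ)]

/-- If the `T`-periodic adjoint solutions are spanned by `z₀`, then the range of
`Y(θ+T)Y(θ)⁻¹ - I` is the orthogonal complement of `z₀(θ)`. -/
theorem range_monodromy_minus_id
    {n : ℕ} (T : ℝ) (hT : 0 < T)
    (A : ℝ → Matrix (Fin n) (Fin n) ℝ)
    (hAcont : Continuous fun p : ℝ × (Fin n → ℝ) => (A p.1).mulVec p.2)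
    (hAper : ∀ t, A (t + T) = A t)
    (Y : ℝ → Matrix (Fin n) (Fin n) ℝ)
    (hY : ∀ (v : Fin n → ℝ) (t : ℝ),
      HasDerivAt (fun s => (Y s).mulVec v) ((A t).mulVec ((Y t).mulVec v)) t)
    (hY0 : Y 0 = 1)
    (z₀ : ℝ → Fin n → ℝ)
    (hz₀ : ∀ t, HasDerivAt z₀ (-(A t)ᵀ.mulVec (z₀ t)) t)
    (hz₀per : ∀ t, z₀ (t + T) = z₀ t) (hz₀ne : z₀ ≠ 0)
    (hspan : ∀ z : ℝ → Fin n → ℝ,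
      (∀ t, HasDerivAt z (-(A t)ᵀ.mulVec (z t)) t) → (∀ t, z (t + T) = z t) →
        ∃ c : ℝ, z = c • z₀) :
    ∀ θ : ℝ,
      {x : Fin n → ℝ | ∃ w, (Y (θ + T) * (Y θ)⁻¹ - 1).mulVec w = x} =
        {η : Fin n → ℝ | η ⬝ᵥ z₀ θ = 0} :=
  range_monodromy_minus_id_general T A hAcont hAper Y hY hY0 z₀ hz₀ hz₀per hspan
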